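/- In a residuated lattice satisfying the distributivity equation e ∧ (y ∨ z) = (e ∧ y) ∨ (e ∧ z), the equation (y ∧ z)\x = (y\x) ∨ (z\x) implies the left prelinearity law (x\y ∧ e) ∨ (y\x ∧ e) = e. -/

import Mathlib

/-- A residuated lattice: a lattice-ordered monoid with left and right residuals. -/
class ResiduatedLattice (α : Type*) extends Lattice α, Monoid α where
  /-- `ldiv a c` is `a \ c`. -/
  ldiv : α → α → α
  /-- `rdiv c b` is `c / b`. -/
  rdiv : α → α → α
  mul_le_iff_le_rdiv : ∀ a b c : α, a * b ≤ c ↔ a ≤ rdiv c b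
  mul_le_iff_le_ldiv : ∀ a b c : α, a * b ≤ c ↔ b ≤ ldiv a c

open ResiduatedLattice

/-!
Applying `(y ∧ z)\x = y\x ∨ z\x` to `(x ∧ y)\(x ∧ y) ≥ e` and using monotonicity of `\` in its
numerator gives `e ≤ x\y ∨ y\x`; meeting with `e` and distributing yields the law.
-/

namespace ResiduatedLattice

variable {α : Type*} [ResiduatedLattice α]

theorem mul_ldiv_le (a b : α) : a * ldiv a b ≤ b :=
  (mul_le_iff_le_ldiv _ _ _).mpr le_rfl

theorem one_le_ldiv_self (a : α) : 1 ≤ ldiv a a :=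
  (mul_le_iff_le_ldiv _ _ _).mp (mul_one a).le

theorem ldiv_monotone (a : α) : Monotone (ldiv a) := fun _ _ hbc =>
  (mul_le_iff_le_ldiv _ _ _).mp ((mul_ldiv_le _ _).trans hbc)

theorem one_le_ldiv_sup_ldiv (x y : α)
    (hxy : ldiv (x ⊓ y) (x ⊓ y) = ldiv x (x ⊓ y) ⊔ ldiv y (x ⊓ y)) :
    1 ≤ ldiv x y ⊔ ldiv y x :=
  calc (1 : α) ≤ ldiv (x ⊓ y) (x ⊓ y) := one_le_ldiv_self _
    _ = ldiv x (x ⊓ y) ⊔ ldiv y (x ⊓ y) := hxy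
    _ ≤ ldiv x y ⊔ ldiv y x :=
      sup_le_sup (ldiv_monotone x inf_le_right) (ldiv_monotone y inf_le_left)

end ResiduatedLattice

theorem lpl2_implies_lpl {α : Type*} [ResiduatedLattice α]
    (hdistr : ∀ y z : α, 1 ⊓ (y ⊔ z) = (1 ⊓ y) ⊔ (1 ⊓ z))
    (hLPL2 : ∀ x y z : α, ldiv (y ⊓ z) x = ldiv y x ⊔ ldiv z x) (x y : α) :
    (ldiv x y ⊓ 1) ⊔ (ldiv y x ⊓ 1) = 1 := by
  have hsup : 1 ≤ ldiv x y ⊔ ldiv y x := one_le_ldiv_sup_ldiv x y (hLPL2 _ x y)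
  calc (ldiv x y ⊓ 1) ⊔ (ldiv y x ⊓ 1)
      = (1 ⊓ ldiv x y) ⊔ (1 ⊓ ldiv y x) := by rw [inf_comm, inf_comm (ldiv y x)]
    _ = 1 ⊓ (ldiv x y ⊔ ldiv y x) := (hdistr _ _).symm
    _ = 1 := inf_eq_left.mpr hsup
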